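/- Let p1, p2 ∈ ℝ^M be strictly positive probability vectors with p1 ≠ p2, let ε1, ε2 > 0, let v* = (p1 − p2)/‖p1 − p2‖, and let S2 = Σ_{i=1}^M (v*_i)²/p2_i. If (Σ_{i=1}^M (v*_i)²·p1_i/(p2_i)²)/S2 < ε1/ε2, then the vector α* ∈ ℝ^M with entries α*_i = √(2ε2/S2)·v*_i/p2_i, as well as −α*, is an optimal solution of the quadratic vector problem. -/

import Mathlib

/-!
After normalising, `Q(β) = ½‖p1 − p2‖² (Σ v*_i β_i)²`, and the weighted Cauchy–Schwarz inequality
`(Σ v*_i β_i)² ≤ (Σ (v*_i)²/p2_i)(Σ p2_i β_i²)` bounds it on the second constraint alone, with equality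
along the line through `v*/p2`. The vector `±α*` is the point of that line on the boundary of the second constraint,
and the activity hypothesis says that it also satisfies the first one.
-/

open Real

noncomputable section

/-- Objective of the quadratic vector problem:
`Q(α) = (1/2)·(Σ_i (p1_i − p2_i) α_i)²`. -/
def Qobj {M : ℕ} (p1 p2 : Fin M → ℝ) (α : Fin M → ℝ) : ℝ :=
  (1 / 2) * (∑ i, (p1 i - p2 i) * α i) ^ 2

/-- Feasible set of the quadratic vector problem:
`(1/2)·Σ_i p1_i α_i² ≤ ε1` and `(1/2)·Σ_i p2_i α_i² ≤ ε2`. -/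
def QFeas {M : ℕ} (p1 p2 : Fin M → ℝ) (ε1 ε2 : ℝ) : Set (Fin M → ℝ) :=
  {α | (1 / 2) * ∑ i, p1 i * (α i) ^ 2 ≤ ε1 ∧ (1 / 2) * ∑ i, p2 i * (α i) ^ 2 ≤ ε2}

/-- Objective of the matrix problem:
`F(A) = (1/2)·‖Σ_i (p1_i − p2_i) A_i‖²` (squared Euclidean norm of the
indicated combination of the rows of `A`). -/
def Fobj {M : ℕ} (p1 p2 : Fin M → ℝ) (A : Matrix (Fin M) (Fin M) ℝ) : ℝ :=
  (1 / 2) * ∑ j, (∑ i, (p1 i - p2 i) * A i j) ^ 2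

/-- Feasible set of the matrix problem:
`(1/2)·Σ_i p1_i ‖A_i‖² ≤ ε1`, `(1/2)·Σ_i p2_i ‖A_i‖² ≤ ε2`, and
`Σ_j A_{ij} √(w0_j) = 0` for every `i`. -/
def MFeas {M : ℕ} (p1 p2 : Fin M → ℝ) (ε1 ε2 : ℝ) (w0 : Fin M → ℝ) :
    Set (Matrix (Fin M) (Fin M) ℝ) :=
  {A | (1 / 2) * ∑ i, p1 i * ∑ j, (A i j) ^ 2 ≤ ε1 ∧
       (1 / 2) * ∑ i, p2 i * ∑ j, (A i j) ^ 2 ≤ ε2 ∧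
       ∀ i, ∑ j, A i j * Real.sqrt (w0 j) = 0}

open Finset

section WeightedCauchySchwarz

variable {ι : Type*} [Fintype ι] {w : ι → ℝ} (c : ι → ℝ)

theorem sum_sq_div_nonneg (hw : ∀ i, 0 < w i) : 0 ≤ ∑ i, c i ^ 2 / w i :=
  sum_nonneg fun i _ => div_nonneg (sq_nonneg _) (hw i).le

theorem sq_sum_mul_le_sum_sq_div_mul_sum_mul_sq (hw : ∀ i, 0 < w i) (β : ι → ℝ) :
    (∑ i, c i * β i) ^ 2 ≤ (∑ i, c i ^ 2 / w i) * ∑ i, w i * β i ^ 2 :=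
  sum_sq_le_sum_mul_sum_of_sq_le_mul univ
    (fun i _ => div_nonneg (sq_nonneg _) (hw i).le)
    (fun i _ => mul_nonneg (hw i).le (sq_nonneg _))
    (fun i _ => le_of_eq (by field_simp [(hw i).ne']))

theorem sum_mul_sq_mul_div_eq (t : ℝ) (u : ι → ℝ) :
    ∑ i, u i * (t * c i / w i) ^ 2 = t ^ 2 * ∑ i, c i ^ 2 * u i / w i ^ 2 := by
  rw [mul_sum]
  exact sum_congr rfl fun i _ => by ring

theorem sum_mul_mul_div_eq (t : ℝ) :
    ∑ i, c i * (t * c i / w i) = t * ∑ i, c i ^ 2 / w i := by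
  rw [mul_sum]
  exact sum_congr rfl fun i _ => by ring

theorem sum_mul_sq_sqrt_mul_div_le (hw : ∀ i, 0 < w i) {ε : ℝ} (hε : 0 ≤ ε) :
    ∑ i, w i * (√(ε / ∑ k, c k ^ 2 / w k) * c i / w i) ^ 2 ≤ ε := by
  set K := ∑ k, c k ^ 2 / w k
  have hK : 0 ≤ K := sum_sq_div_nonneg c hw
  have hcw : ∑ i, c i ^ 2 * w i / w i ^ 2 = K :=
    sum_congr rfl fun i _ => by field_simp [(hw i).ne']
  rw [sum_mul_sq_mul_div_eq, hcw, Real.sq_sqrt (div_nonneg hε hK)]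
  rcases hK.eq_or_lt with hK0 | hKpos
  · simp [← hK0, hε]
  · rw [div_mul_cancel₀ _ hKpos.ne']

theorem sq_sum_mul_le_sq_sum_mul_sqrt_mul_div (hw : ∀ i, 0 < w i) {ε : ℝ} (hε : 0 ≤ ε)
    {β : ι → ℝ} (hβ : ∑ i, w i * β i ^ 2 ≤ ε) :
    (∑ i, c i * β i) ^ 2 ≤ (∑ i, c i * (√(ε / ∑ k, c k ^ 2 / w k) * c i / w i)) ^ 2 := by
  set K := ∑ k, c k ^ 2 / w k
  have hK : 0 ≤ K := sum_sq_div_nonneg c hw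
  -- `(ε / K) * K ^ 2 = ε * K` also when `K = 0`, since then `ε / K = 0`.
  have hmax : (√(ε / K) * K) ^ 2 = K * ε := by
    rw [mul_pow, Real.sq_sqrt (div_nonneg hε hK)]
    rcases hK.eq_or_lt with hK0 | hKpos
    · simp [← hK0]
    · field_simp
  rw [sum_mul_mul_div_eq, hmax]
  exact (sq_sum_mul_le_sum_sq_div_mul_sum_mul_sq c hw β).trans (mul_le_mul_of_nonneg_left hβ hK)

end WeightedCauchySchwarz

theorem sqrt_sum_sq_mul_div_sqrt_sum_sq {ι : Type*} [Fintype ι] (x : ι → ℝ) (i : ι) :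
    √(∑ k, x k ^ 2) * (x i / √(∑ k, x k ^ 2)) = x i := by
  by_cases hN : √(∑ k, x k ^ 2) = 0
  · have hsum : ∑ k, x k ^ 2 = 0 :=
      (Real.sqrt_eq_zero (sum_nonneg fun k _ => sq_nonneg _)).mp hN
    have hxi : x i ^ 2 = 0 :=
      le_antisymm (hsum ▸ single_le_sum (fun k _ => sq_nonneg (x k)) (mem_univ i)) (sq_nonneg _)
    simp [pow_eq_zero_iff two_ne_zero |>.mp hxi]
  · field_simp

section QuadraticVectorProblem

variable {M : ℕ} {p1 p2 : Fin M → ℝ}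

theorem Qobj_neg (α : Fin M → ℝ) : Qobj p1 p2 (-α) = Qobj p1 p2 α := by
  simp [Qobj, sum_neg_distrib]

theorem neg_mem_QFeas {ε1 ε2 : ℝ} {α : Fin M → ℝ} (hα : α ∈ QFeas p1 p2 ε1 ε2) :
    -α ∈ QFeas p1 p2 ε1 ε2 := by
  simpa [QFeas] using hα

theorem Qobj_le_Qobj_of_sq_sum_le {N : ℝ} {v : Fin M → ℝ} (hv : ∀ i, p1 i - p2 i = N * v i)
    {α β : Fin M → ℝ} (h : (∑ i, v i * β i) ^ 2 ≤ (∑ i, v i * α i) ^ 2) :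
    Qobj p1 p2 β ≤ Qobj p1 p2 α := by
  have hsum (γ : Fin M → ℝ) : ∑ i, (p1 i - p2 i) * γ i = N * ∑ i, v i * γ i := by
    simp only [hv, mul_sum, mul_assoc]
  simp only [Qobj, hsum, mul_pow]
  gcongr

end QuadraticVectorProblem

theorem optimal_alpha_second_constraint_active_general {M : ℕ}
    (p1 p2 : Fin M → ℝ)
    (hp2 : ∀ i, 0 < p2 i)
    (ε1 ε2 : ℝ) (hε2 : 0 < ε2)
    (vs : Fin M → ℝ)
    (hvs : ∀ i, vs i = (p1 i - p2 i) / Real.sqrt (∑ k, (p1 k - p2 k) ^ 2))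
    (S2 : ℝ) (hS2 : S2 = ∑ i, (vs i) ^ 2 / p2 i)
    (hactive : (∑ i, (vs i) ^ 2 * p1 i / (p2 i) ^ 2) / S2 < ε1 / ε2)
    (αs : Fin M → ℝ)
    (hαs : ∀ i, αs i = Real.sqrt (2 * ε2 / S2) * vs i / p2 i) :
    (αs ∈ QFeas p1 p2 ε1 ε2 ∧
      ∀ β ∈ QFeas p1 p2 ε1 ε2, Qobj p1 p2 β ≤ Qobj p1 p2 αs) ∧
    (-αs ∈ QFeas p1 p2 ε1 ε2 ∧
      ∀ β ∈ QFeas p1 p2 ε1 ε2, Qobj p1 p2 β ≤ Qobj p1 p2 (-αs)) := by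
  have hαs' : αs = fun i => √(2 * ε2 / S2) * vs i / p2 i := funext hαs
  have hdiff (i : Fin M) : p1 i - p2 i = √(∑ k, (p1 k - p2 k) ^ 2) * vs i := by
    rw [hvs, sqrt_sum_sq_mul_div_sqrt_sum_sq (fun k => p1 k - p2 k)]
  have hε : 0 ≤ 2 * ε2 := by positivity
  have hS2nonneg : 0 ≤ S2 := hS2 ▸ sum_sq_div_nonneg vs hp2
  have hopt : ∀ β ∈ QFeas p1 p2 ε1 ε2, Qobj p1 p2 β ≤ Qobj p1 p2 αs := fun β hβ => by
    rw [hαs', hS2]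
    exact Qobj_le_Qobj_of_sq_sum_le hdiff
      (sq_sum_mul_le_sq_sum_mul_sqrt_mul_div vs hp2 hε (by linarith [hβ.2]))
  have hfeas : αs ∈ QFeas p1 p2 ε1 ε2 := by
    rw [hαs']
    constructor
    · rw [sum_mul_sq_mul_div_eq, Real.sq_sqrt (div_nonneg hε hS2nonneg)]
      calc (1 / 2) * (2 * ε2 / S2 * ∑ i, vs i ^ 2 * p1 i / p2 i ^ 2)
          = (∑ i, vs i ^ 2 * p1 i / p2 i ^ 2) / S2 * ε2 := by ring
        _ ≤ ε1 := ((lt_div_iff₀ hε2).mp hactive).le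
    · rw [hS2]
      linarith [sum_mul_sq_sqrt_mul_div_le vs hp2 hε]
  exact ⟨⟨hfeas, hopt⟩, neg_mem_QFeas hfeas, fun β hβ => (Qobj_neg αs).symm ▸ hopt β hβ⟩

/-- if only the second constraint is active, i.e.
`(Σ_i (v*_i)² p1_i/(p2_i)²)/S2 < ε1/ε2` with `S2 = Σ_i (v*_i)²/p2_i`, then
`α*_i = √(2ε2/S2)·v*_i/p2_i`, as well as `−α*`, is an optimal solution of the
quadratic vector problem. -/
theorem optimal_alpha_second_constraint_active {M : ℕ}
    (p1 p2 : Fin M → ℝ)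
    (hp1 : ∀ i, 0 < p1 i) (hp1s : ∑ i, p1 i = 1)
    (hp2 : ∀ i, 0 < p2 i) (hp2s : ∑ i, p2 i = 1)
    (hne : p1 ≠ p2)
    (ε1 ε2 : ℝ) (hε1 : 0 < ε1) (hε2 : 0 < ε2)
    (vs : Fin M → ℝ)
    (hvs : ∀ i, vs i = (p1 i - p2 i) / Real.sqrt (∑ k, (p1 k - p2 k) ^ 2))
    (S2 : ℝ) (hS2 : S2 = ∑ i, (vs i) ^ 2 / p2 i)
    (hactive : (∑ i, (vs i) ^ 2 * p1 i / (p2 i) ^ 2) / S2 < ε1 / ε2)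
    (αs : Fin M → ℝ)
    (hαs : ∀ i, αs i = Real.sqrt (2 * ε2 / S2) * vs i / p2 i) :
    (αs ∈ QFeas p1 p2 ε1 ε2 ∧
      ∀ β ∈ QFeas p1 p2 ε1 ε2, Qobj p1 p2 β ≤ Qobj p1 p2 αs) ∧
    (-αs ∈ QFeas p1 p2 ε1 ε2 ∧
      ∀ β ∈ QFeas p1 p2 ε1 ε2, Qobj p1 p2 β ≤ Qobj p1 p2 (-αs)) :=
  optimal_alpha_second_constraint_active_general p1 p2 hp2 ε1 ε2 hε2 vs hvs S2 hS2 hactive αs hαs
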